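/- Central Slicing Theorem: Let p ≥ 1 and let f : ℝ^p → ℂ be integrable. Let θ ∈ ℝ^p be a unit vector and {θ, e₁, …, e_{p−1}} an orthonormal basis of ℝ^p extending θ. Then for every r ∈ ℝ, the one-dimensional Fourier transform of the Radon slice equals the p-dimensional Fourier transform of f evaluated at rθ: ∫_ℝ R(f)(θ, u) e^{−iur} du = ∫_{ℝ^p} f(z) e^{−i⟨z, rθ⟩} dz. -/

import Mathlib

open MeasureTheory
open scoped RealInnerProductSpace

/-- The Radon transform of a complex-valued integrable function `f : ℝ^p → ℂ`
along the direction `θ`, using the orthonormal family `e` completing `θ` to a basis: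
`R(f)(θ, u) = ∫_{ℝ^{p-1}} f (u θ + Σ_j s_j e_j) ds`. -/
noncomputable def radonC (p : ℕ) (f : EuclideanSpace ℝ (Fin p) → ℂ)
    (θ : EuclideanSpace ℝ (Fin p)) (e : Fin (p - 1) → EuclideanSpace ℝ (Fin p)) (u : ℝ) : ℂ :=
  ∫ s : EuclideanSpace ℝ (Fin (p - 1)), f (u • θ + ∑ j, s j • e j)

/-! The orthonormal basis `θ, e₁, …, e_{p-1}` gives a measure-preserving identification
`ℝ × ℝ^{p-1} ≃ ℝ^p`, `(u, s) ↦ u θ + ∑ sⱼ eⱼ`. In these coordinates the phase `⟪z, r θ⟫` equals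
`u r`, independently of `s`, so Fubini splits the `p`-dimensional Fourier integral into the Radon
integral over `s` followed by the one-dimensional Fourier integral over `u`. -/

open Complex

theorem MeasureTheory.Integrable.mul_exp_neg_I_mul_ofReal {α : Type*} [MeasurableSpace α]
    {μ : Measure α} {f : α → ℂ} {g : α → ℝ} (hf : Integrable f μ) (hg : AEStronglyMeasurable g μ) :
    Integrable (fun x => f x * exp (-(I * g x))) μ :=
  hf.mul_bdd (c := 1)
    (continuous_exp.comp_aestronglyMeasurable
      ((continuous_ofReal.comp_aestronglyMeasurable hg).const_mul I).neg)
    (.of_forall fun x => by simp [Complex.norm_exp])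

section Slice

variable {ι E : Type*} [Fintype ι] [NormedAddCommGroup E] [InnerProductSpace ℝ E]

theorem Orthonormal.inner_smul_add_sum_smul_left {θ : E} {e : ι → E}
    (h : Orthonormal ℝ (Sum.elim (fun _ : Unit => θ) e)) (u : ℝ) (s : ι → ℝ) :
    ⟪u • θ + ∑ j, s j • e j, θ⟫ = u := by
  simpa [Fintype.sum_sum_type] using h.inner_left_fintype (Sum.elim (fun _ => u) s) (.inl ())

namespace OrthonormalBasis

variable [MeasurableSpace E] [BorelSpace E]

noncomputable def sliceEquiv (b : OrthonormalBasis (Unit ⊕ ι) ℝ E) :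
    (ℝ × EuclideanSpace ℝ ι) ≃ᵐ E :=
  ((MeasurableEquiv.funUnique Unit ℝ).symm.prodCongr (MeasurableEquiv.toLp 2 (ι → ℝ)).symm).trans
    ((MeasurableEquiv.sumPiEquivProdPi fun _ : Unit ⊕ ι => ℝ).symm.trans
      ((MeasurableEquiv.toLp 2 (Unit ⊕ ι → ℝ)).trans b.repr.symm.toHomeomorph.toMeasurableEquiv))

variable (b : OrthonormalBasis (Unit ⊕ ι) ℝ E)

theorem sliceEquiv_apply (u : ℝ) (s : EuclideanSpace ℝ ι) :
    b.sliceEquiv (u, s) = u • b (.inl ()) + ∑ j, s j • b (.inr j) := by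
  change b.repr.symm _ = _
  rw [← b.sum_repr_symm, Fintype.sum_sum_type]
  simp [MeasurableEquiv.coe_toLp_symm, MeasurableEquiv.prodCongr, MeasurableEquiv.funUnique,
    MeasurableEquiv.sumPiEquivProdPi, Equiv.sumPiEquivProdPi, uniqueElim]

theorem measurePreserving_sliceEquiv [FiniteDimensional ℝ E] : MeasurePreserving b.sliceEquiv := by
  rw [Measure.volume_eq_prod]
  exact b.measurePreserving_repr_symm.comp
    ((EuclideanSpace.volume_preserving_symm_measurableEquiv_toLp _).symm _ |>.comp
      ((volume_measurePreserving_sumPiEquivProdPi_symm _).comp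
        (((volume_preserving_funUnique Unit ℝ).symm _).prod
          (EuclideanSpace.volume_preserving_symm_measurableEquiv_toLp _))))

theorem integral_eq_integral_integral_slice [FiniteDimensional ℝ E] {G : Type*}
    [NormedAddCommGroup G] [NormedSpace ℝ G] [CompleteSpace G] {F : E → G} (hF : Integrable F) :
    ∫ z, F z = ∫ u : ℝ, ∫ s : EuclideanSpace ℝ ι, F (u • b (.inl ()) + ∑ j, s j • b (.inr j)) := by
  have hFΦ : Integrable (F ∘ b.sliceEquiv) (volume.prod volume) := by
    rw [← Measure.volume_eq_prod]
    exact (b.measurePreserving_sliceEquiv.integrable_comp_emb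
      b.sliceEquiv.measurableEmbedding).mpr hF
  rw [← b.measurePreserving_sliceEquiv.integral_comp' F, Measure.volume_eq_prod,
    integral_prod (fun q => F (b.sliceEquiv q)) hFΦ]
  simp only [sliceEquiv_apply]

end OrthonormalBasis

end Slice

theorem central_slicing_theorem (p : ℕ)
    (f : EuclideanSpace ℝ (Fin p) → ℂ) (hf : Integrable f)
    (θ : EuclideanSpace ℝ (Fin p))
    (e : Fin (p - 1) → EuclideanSpace ℝ (Fin p))
    (horth : Orthonormal ℝ (Sum.elim (fun _ : Unit => θ) e))
    (hspan : Submodule.span ℝ (Set.range (Sum.elim (fun _ : Unit => θ) e)) = ⊤)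
    (r : ℝ) :
    ∫ u : ℝ, radonC p f θ e u * Complex.exp (-(Complex.I * u * r)) =
      ∫ z : EuclideanSpace ℝ (Fin p),
        f z * Complex.exp (-(Complex.I * (⟪z, r • θ⟫ : ℝ))) := by
  have hF := hf.mul_exp_neg_I_mul_ofReal (g := fun z => ⟪z, r • θ⟫)
    (continuous_id.inner continuous_const).aestronglyMeasurable
  rw [(OrthonormalBasis.mk horth hspan.ge).integral_eq_integral_integral_slice hF]
  simp only [OrthonormalBasis.coe_mk, Sum.elim_inl, Sum.elim_inr, real_inner_smul_right,
    horth.inner_smul_add_sum_smul_left, radonC, ← integral_mul_const]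
  congr! 6
  push_cast
  ring
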